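/- arXiv:1811.09042 — 3 statements merged into one kernel-verified Lean document; each statement's English description precedes it below -/
import Mathlib

section
/- The compatibility condition Jᵀ Ω J = Ω holds if and only if βᵀg = gβ; i.e., the semi-flat symplectic form ω̌ is compatible with the B-field–twisted complex structure J̌_{β,0} exactly when the matrix form βᵀg = gβ of the paper's B-field assumption Σ β^j_i g_{jk} dx^i∧dx^k = 0 holds. -/
/-- The compatibility condition `Jᵀ Ω J = Ω` between the semi-flat
symplectic form `ω̌` (matrix `Ω = [[0,−g],[g,0]]`) and the B-field–twisted complex
structure `J̌_{β,0}` (matrix `J = [[λ⁻¹β, λ⁻¹Iₙ],[−λ(Iₙ+λ⁻²β²), −λ⁻¹β]]`) holds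
if and only if `βᵀ g = g β`. -/
theorem semiflat_compatibility_iff_Bfield_assumption
    (n : ℕ) (hn : 1 ≤ n) (lam : ℝ) (hlam : lam ≠ 0)
    (β g : Matrix (Fin n) (Fin n) ℝ) :
    let J : Matrix (Fin n ⊕ Fin n) (Fin n ⊕ Fin n) ℝ :=
      Matrix.fromBlocks (lam⁻¹ • β) (lam⁻¹ • (1 : Matrix (Fin n) (Fin n) ℝ))
        (-(lam • ((1 : Matrix (Fin n) (Fin n) ℝ) + lam⁻¹ ^ 2 • (β * β))))
        (-(lam⁻¹ • β))
    let Ω : Matrix (Fin n ⊕ Fin n) (Fin n ⊕ Fin n) ℝ :=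
      Matrix.fromBlocks 0 (-g) g 0
    (J.transpose * Ω * J = Ω) ↔ β.transpose * g = g * β := by
  intro J Ω
  simp only [J, Ω, Matrix.fromBlocks_transpose, Matrix.fromBlocks_multiply,
    Matrix.fromBlocks_inj, Matrix.transpose_smul, Matrix.transpose_neg, Matrix.transpose_one,
    Matrix.transpose_mul, Matrix.transpose_add, Matrix.neg_mul, Matrix.mul_neg,
    Matrix.zero_mul, Matrix.mul_zero, zero_add, add_zero, smul_neg, neg_neg,
    Matrix.smul_mul, Matrix.mul_smul, smul_smul, Matrix.mul_one, Matrix.one_mul,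
    Matrix.add_mul, Matrix.mul_add]
  constructor
  · rintro ⟨-, -, -, h4⟩
    rw [neg_add_eq_zero] at h4
    have hc : (lam⁻¹ * lam⁻¹ : ℝ) ≠ 0 := by positivity
    exact smul_right_injective (Matrix (Fin n) (Fin n) ℝ) hc h4
  · intro h
    have h2 : β.transpose * β.transpose * g = g * β * β := by
      rw [mul_assoc, h, ← mul_assoc, h]
    refine ⟨?_, ?_, ?_, ?_⟩ <;>
      simp only [← mul_assoc, h2, h] <;> match_scalars <;> field_simp <;> ring
end

section
/- Suppose Π ∈ g¹ ⊗̂ m satisfies dΠ = 0, and suppose Φ ∈ g¹ ⊗̂ m satisfies the Kuranishi-type equation Φ = Π − ½ H[Φ,Φ]. Then Φ satisfies the Maurer–Cartan equation dΦ + ½[Φ,Φ] = 0 if and only if P[Φ,Φ] = 0. -/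
/-!
Let `R = dΦ + ½[Φ,Φ]` be the Maurer–Cartan defect. Applying `d` to the Kuranishi equation and
using the homotopy identity gives `R = ½ H d[Φ,Φ] + ½ P[Φ,Φ]`. In degree one, Leibniz and
Jacobi give `d[Φ,Φ] = 2[dΦ,Φ]` and `[[Φ,Φ],Φ] = 0`, hence `d[Φ,Φ] = 2[R,Φ]` and
`R = H[R,Φ] + ½ P[Φ,Φ]`. If `R = 0` this forces `P[Φ,Φ] = 0`. Conversely, if `P[Φ,Φ] = 0`
then `R = H[R,Φ]`; as `Φ` has no constant term, each coefficient of the right-hand side only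
involves strictly lower coefficients of `R`, so `R = 0` by well-founded induction.
-/

open Finset HasAntidiagonal

namespace Kuranishi

section Antidiagonal

variable {A M : Type*} [AddCommMonoid A] [HasAntidiagonal A] [AddCommMonoid M]

theorem sum_antidiagonal_swap (k : A) (f : A → A → M) :
    ∑ p ∈ antidiagonal k, f p.1 p.2 = ∑ p ∈ antidiagonal k, f p.2 p.1 :=
  sum_equiv (Equiv.prodComm A A) (by simp [add_comm]) (by simp)

theorem sum_antidiagonal_antidiagonal_swap (k : A) (f : A → A → A → M) :
    ∑ p ∈ antidiagonal k, ∑ q ∈ antidiagonal p.1, f q.1 q.2 p.2 =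
      ∑ p ∈ antidiagonal k, ∑ q ∈ antidiagonal p.1, f q.1 p.2 q.2 := by
  simp only [sum_sigma']
  refine sum_nbij' (fun x ↦ ⟨(x.2.1 + x.1.2, x.2.2), (x.2.1, x.1.2)⟩)
    (fun x ↦ ⟨(x.2.1 + x.1.2, x.2.2), (x.2.1, x.1.2)⟩) ?_ ?_ ?_ ?_ ?_ <;>
    aesop (add simp [add_right_comm])

theorem antidiagonal.fst_lt [PartialOrder A] [CanonicallyOrderedAdd A] [IsLeftCancelAdd A]
    {k : A} {p : A × A} (hp : p ∈ antidiagonal k) (h : p.2 ≠ 0) : p.1 < k := by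
  refine (antidiagonal.fst_le hp).lt_of_ne fun h₁ ↦ h ?_
  rw [HasAntidiagonal.mem_antidiagonal, ← h₁] at hp
  exact add_eq_left.mp hp

end Antidiagonal

section Convolution

variable {R A M N P : Type*} [CommSemiring R] [AddCommMonoid A] [HasAntidiagonal A]
  [AddCommMonoid M] [AddCommMonoid N] [AddCommMonoid P] [Module R M] [Module R N] [Module R P]

def convBracket (br : M →ₗ[R] N →ₗ[R] P) : (A → M) →ₗ[R] (A → N) →ₗ[R] A → P :=
  LinearMap.mk₂ R (fun Φ Ψ k ↦ ∑ p ∈ antidiagonal k, br (Φ p.1) (Ψ p.2))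
    (fun _ _ _ ↦ by ext; simp [sum_add_distrib]) (fun _ _ _ ↦ by ext; simp [smul_sum])
    (fun _ _ _ ↦ by ext; simp [sum_add_distrib]) (fun _ _ _ ↦ by ext; simp [smul_sum])

@[simp]
theorem convBracket_apply (br : M →ₗ[R] N →ₗ[R] P) (Φ : A → M) (Ψ : A → N) (k : A) :
    convBracket br Φ Ψ k = ∑ p ∈ antidiagonal k, br (Φ p.1) (Ψ p.2) :=
  rfl

theorem eq_zero_of_forall_eq_convBracket [PartialOrder A] [CanonicallyOrderedAdd A]
    [IsLeftCancelAdd A] [WellFoundedLT A] {br : M →ₗ[R] N →ₗ[R] P} (T : P →ₗ[R] M)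
    {Φ : A → M} {Ψ : A → N} (hΨ : Ψ 0 = 0) (hΦ : ∀ k, Φ k = T (convBracket br Φ Ψ k)) :
    Φ = 0 := by
  funext k
  induction k using WellFoundedLT.induction with
  | _ k ih =>
    rw [hΦ k, convBracket_apply, sum_eq_zero, map_zero, Pi.zero_apply]
    intro p hp
    by_cases h : p.2 = 0
    · rw [h, hΨ, map_zero]
    · rw [ih p.1 (antidiagonal.fst_lt hp h), Pi.zero_apply, map_zero, LinearMap.zero_apply]

end Convolution

section Graded

variable {𝕜 W : Type*} [Field 𝕜] [AddCommGroup W] [Module 𝕜 W]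

def GradedSkew (G : ℤ → Submodule 𝕜 W) (br : W →ₗ[𝕜] W →ₗ[𝕜] W) : Prop :=
  ∀ i j : ℤ, ∀ x ∈ G i, ∀ y ∈ G j, br x y = -(((-1 : 𝕜) ^ (i * j)) • br y x)

def GradedJacobi (G : ℤ → Submodule 𝕜 W) (br : W →ₗ[𝕜] W →ₗ[𝕜] W) : Prop :=
  ∀ i j k : ℤ, ∀ x ∈ G i, ∀ y ∈ G j, ∀ z ∈ G k,
    br x (br y z) = br (br x y) z + ((-1 : 𝕜) ^ (i * j)) • br y (br x z)

def GradedLeibniz (G : ℤ → Submodule 𝕜 W) (d : W →ₗ[𝕜] W) (br : W →ₗ[𝕜] W →ₗ[𝕜] W) : Prop :=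
  ∀ i j : ℤ, ∀ x ∈ G i, ∀ y ∈ G j, d (br x y) = br (d x) y + ((-1 : 𝕜) ^ i) • br x (d y)

variable {G : ℤ → Submodule 𝕜 W} {d : W →ₗ[𝕜] W} {br : W →ₗ[𝕜] W →ₗ[𝕜] W} {x y z : W}

theorem GradedSkew.anticomm_of_mem_one_two (hskew : GradedSkew G br) (hx : x ∈ G 1)
    (hy : y ∈ G 2) : br x y = -br y x := by
  simpa using hskew 1 2 x hx y hy

theorem GradedJacobi.cyclic_of_mem_one (hjacobi : GradedJacobi G br) (hskew : GradedSkew G br)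
    (hdeg_br : ∀ i j : ℤ, ∀ x ∈ G i, ∀ y ∈ G j, br x y ∈ G (i + j))
    (hx : x ∈ G 1) (hy : y ∈ G 1) (hz : z ∈ G 1) :
    br (br x y) z + br (br x z) y + br (br y z) x = 0 := by
  have h := hjacobi 1 1 1 x hx y hy z hz
  rw [hskew.anticomm_of_mem_one_two hx (hdeg_br 1 1 y hy z hz),
    hskew.anticomm_of_mem_one_two hy (hdeg_br 1 1 x hx z hz)] at h
  norm_num at h
  linear_combination (norm := module) -h

theorem GradedLeibniz.d_br_of_mem_one (hleibniz : GradedLeibniz G d br) (hskew : GradedSkew G br)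
    (hdeg_d : ∀ i : ℤ, ∀ x ∈ G i, d x ∈ G (i + 1)) (hx : x ∈ G 1) (hy : y ∈ G 1) :
    d (br x y) = br (d x) y + br (d y) x := by
  have h := hleibniz 1 1 x hx y hy
  rw [hskew.anticomm_of_mem_one_two hx (hdeg_d 1 y hy)] at h
  simpa using h

variable {A : Type*} [AddCommMonoid A] [HasAntidiagonal A] {Φ : A → W}

theorem d_comp_convBracket_self (hleibniz : GradedLeibniz G d br) (hskew : GradedSkew G br)
    (hdeg_d : ∀ i : ℤ, ∀ x ∈ G i, d x ∈ G (i + 1)) (hΦ : ∀ k, Φ k ∈ G 1) :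
    d ∘ convBracket br Φ Φ = (2 : 𝕜) • convBracket br (d ∘ Φ) Φ := by
  funext k
  have hswap := sum_antidiagonal_swap k fun a b ↦ br (d (Φ a)) (Φ b)
  simp only [Function.comp_apply, convBracket_apply, map_sum, Pi.smul_apply]
  rw [sum_congr rfl fun p _ ↦ hleibniz.d_br_of_mem_one hskew hdeg_d (hΦ p.1) (hΦ p.2),
    sum_add_distrib, ← hswap, two_smul]

theorem convBracket_convBracket_self [CharZero 𝕜] (hjacobi : GradedJacobi G br)
    (hskew : GradedSkew G br) (hdeg_br : ∀ i j : ℤ, ∀ x ∈ G i, ∀ y ∈ G j, br x y ∈ G (i + j))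
    (hΦ : ∀ k, Φ k ∈ G 1) :
    convBracket br (convBracket br Φ Φ) Φ = 0 := by
  funext k
  let T : A → A → A → W := fun a b c ↦ br (br (Φ a) (Φ b)) (Φ c)
  set S := ∑ p ∈ antidiagonal k, ∑ q ∈ antidiagonal p.1, T q.1 q.2 p.2
  -- each of the three sums in the cyclic Jacobi identity is a reindexing of `S`
  have h₁ : ∑ p ∈ antidiagonal k, ∑ q ∈ antidiagonal p.1, T q.1 p.2 q.2 = S :=
    (sum_antidiagonal_antidiagonal_swap k T).symm
  have h₂ : ∑ p ∈ antidiagonal k, ∑ q ∈ antidiagonal p.1, T q.2 p.2 q.1 = S := by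
    rw [← h₁]
    exact sum_congr rfl fun p _ ↦ sum_antidiagonal_swap p.1 fun a b ↦ T b p.2 a
  have hJ : ∑ p ∈ antidiagonal k, ∑ q ∈ antidiagonal p.1,
      (T q.1 q.2 p.2 + T q.1 p.2 q.2 + T q.2 p.2 q.1) = 0 :=
    sum_eq_zero fun p _ ↦ sum_eq_zero fun q _ ↦
      hjacobi.cyclic_of_mem_one hskew hdeg_br (hΦ q.1) (hΦ q.2) (hΦ p.2)
  simp only [sum_add_distrib, h₁, h₂] at hJ
  have h₃ : (3 : 𝕜) • S = 0 := by rw [← hJ]; module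
  simpa [map_sum, S, T] using (smul_eq_zero.mp h₃).resolve_left three_ne_zero

theorem d_comp_convBracket_self_eq [CharZero 𝕜] (hleibniz : GradedLeibniz G d br)
    (hjacobi : GradedJacobi G br) (hskew : GradedSkew G br)
    (hdeg_d : ∀ i : ℤ, ∀ x ∈ G i, d x ∈ G (i + 1))
    (hdeg_br : ∀ i j : ℤ, ∀ x ∈ G i, ∀ y ∈ G j, br x y ∈ G (i + j)) (hΦ : ∀ k, Φ k ∈ G 1) :
    d ∘ convBracket br Φ Φ =
      (2 : 𝕜) • convBracket br (d ∘ Φ + (1 / 2 : 𝕜) • convBracket br Φ Φ) Φ := by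
  rw [LinearMap.map_add₂, LinearMap.map_smul₂,
    convBracket_convBracket_self hjacobi hskew hdeg_br hΦ, smul_zero, add_zero]
  exact d_comp_convBracket_self hleibniz hskew hdeg_d hΦ

end Graded

theorem d_add_half_smul_eq_of_homotopy {𝕜 W : Type*} [Field 𝕜] [CharZero 𝕜] [AddCommGroup W]
    [Module 𝕜 W] {d H P : W →ₗ[𝕜] W} (hhomotopy : ∀ x, d (H x) + H (d x) = x - P x)
    {x π b c : W} (hx : x = π - (1 / 2 : 𝕜) • H b) (hπ : d π = 0) (hb : d b = (2 : 𝕜) • c) :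
    d x + (1 / 2 : 𝕜) • b = H c + (1 / 2 : 𝕜) • P b := by
  have h := hhomotopy b
  rw [hb, map_smul] at h
  rw [hx, map_sub, map_smul, hπ]
  linear_combination (norm := module) (-1 / 2 : 𝕜) • h

end Kuranishi

open Kuranishi

theorem kuranishi_solution_MC_iff_obstruction_vanishes_general
    (Wsp : Type) [AddCommGroup Wsp] [Module ℂ Wsp]
    (G : ℤ → Submodule ℂ Wsp)
    (d H P : Wsp →ₗ[ℂ] Wsp)
    (br : Wsp →ₗ[ℂ] Wsp →ₗ[ℂ] Wsp)
    -- the operations respect the grading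
    (hdeg_d : ∀ i : ℤ, ∀ x ∈ G i, d x ∈ G (i + 1))
    (hdeg_br : ∀ i j : ℤ, ∀ x ∈ G i, ∀ y ∈ G j, br x y ∈ G (i + j))
    -- dgLa axioms and the homotopy identity `d∘H + H∘d = id − P`
    (hhomotopy : ∀ x : Wsp, d (H x) + H (d x) = x - P x)
    (hskew : ∀ i j : ℤ, ∀ x ∈ G i, ∀ y ∈ G j,
      br x y = -(((-1 : ℂ) ^ (i * j)) • br y x))
    (hjacobi : ∀ i j k : ℤ, ∀ x ∈ G i, ∀ y ∈ G j, ∀ z ∈ G k,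
      br x (br y z) = br (br x y) z + ((-1 : ℂ) ^ (i * j)) • br y (br x z))
    (hleibniz : ∀ i j : ℤ, ∀ x ∈ G i, ∀ y ∈ G j,
      d (br x y) = br (d x) y + ((-1 : ℂ) ^ i) • br x (d y))
    -- the formal variables `t₁, …, t_l`
    (l : ℕ)
    -- `Pi, Φ ∈ g¹ ⊗̂ m`
    (Pi Φ : (Fin l →₀ ℕ) → Wsp)
    (hΦdeg : ∀ k, Φ k ∈ G 1) (hΦm : Φ 0 = 0)
    -- `d Pi = 0`
    (hdPi : ∀ k, d (Pi k) = 0)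
    -- the Kuranishi-type equation `Φ = Pi − ½ H [Φ, Φ]`
    (hkuranishi : ∀ k, Φ k = Pi k - (1 / 2 : ℂ) •
      H (∑ p ∈ Finset.HasAntidiagonal.antidiagonal k, br (Φ p.1) (Φ p.2))) :
    -- Maurer–Cartan equation `dΦ + ½[Φ,Φ] = 0` iff `P[Φ,Φ] = 0`
    ((∀ k, d (Φ k) + (1 / 2 : ℂ) •
        (∑ p ∈ Finset.HasAntidiagonal.antidiagonal k, br (Φ p.1) (Φ p.2)) = 0) ↔
      (∀ k, P (∑ p ∈ Finset.HasAntidiagonal.antidiagonal k, br (Φ p.1) (Φ p.2)) = 0)) := by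
  change (∀ k, (d ∘ Φ + (1 / 2 : ℂ) • convBracket br Φ Φ) k = 0) ↔
    ∀ k, P (convBracket br Φ Φ k) = 0
  set defect := d ∘ Φ + (1 / 2 : ℂ) • convBracket br Φ Φ
  have hdefect (k) :
      defect k = H (convBracket br defect Φ k) + (1 / 2 : ℂ) • P (convBracket br Φ Φ k) :=
    d_add_half_smul_eq_of_homotopy hhomotopy (hkuranishi k) (hdPi k)
      (congrFun (d_comp_convBracket_self_eq hleibniz hjacobi hskew hdeg_d hdeg_br hΦdeg) k)
  constructor
  · intro hMC k
    simpa [show defect = 0 from funext hMC] using (hdefect k).symm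
  · intro hP
    refine congrFun (eq_zero_of_forall_eq_convBracket (br := br) H hΦm fun k ↦ ?_)
    rw [hdefect k, hP k, smul_zero, add_zero]

/-- Let `(g, d, [·,·])` be a ℤ-graded differential graded Lie
algebra over ℂ (modeled as a ℂ-module `Wsp` which is the internal direct sum of
graded pieces `G : ℤ → Submodule ℂ Wsp`, in which the differential `d`,
homotopy `H`, projection `P` and bracket `br` respect the grading and satisfy
the dgLa axioms together with the homotopy identity `d∘H + H∘d = id − P`).
Extend all operations coefficient-wise (the bracket by convolution) to the
completed tensor product `g ⊗̂ ℂ[[t₁,…,t_l]]`, modeled as formal series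
`(Fin l →₀ ℕ) → Wsp`; membership in `g¹ ⊗̂ m` means every coefficient lies in
`G 1` and the constant coefficient vanishes.  Suppose `Pi ∈ g¹ ⊗̂ m` satisfies
`d Pi = 0`, and `Φ ∈ g¹ ⊗̂ m` satisfies the Kuranishi-type equation
`Φ = Pi − ½ H[Φ,Φ]`.  Then `Φ` satisfies the Maurer–Cartan equation
`dΦ + ½[Φ,Φ] = 0` if and only if `P[Φ,Φ] = 0`. -/
theorem kuranishi_solution_MC_iff_obstruction_vanishes
    (Wsp : Type) [AddCommGroup Wsp] [Module ℂ Wsp]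
    (G : ℤ → Submodule ℂ Wsp)
    (hdirect : DirectSum.IsInternal G)
    (d H P : Wsp →ₗ[ℂ] Wsp)
    (br : Wsp →ₗ[ℂ] Wsp →ₗ[ℂ] Wsp)
    -- the operations respect the grading
    (hdeg_d : ∀ i : ℤ, ∀ x ∈ G i, d x ∈ G (i + 1))
    (hdeg_H : ∀ i : ℤ, ∀ x ∈ G i, H x ∈ G (i - 1))
    (hdeg_P : ∀ i : ℤ, ∀ x ∈ G i, P x ∈ G i)
    (hdeg_br : ∀ i j : ℤ, ∀ x ∈ G i, ∀ y ∈ G j, br x y ∈ G (i + j))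
    -- dgLa axioms and the homotopy identity `d∘H + H∘d = id − P`
    (hdd : d ∘ₗ d = 0)
    (hhomotopy : ∀ x : Wsp, d (H x) + H (d x) = x - P x)
    (hskew : ∀ i j : ℤ, ∀ x ∈ G i, ∀ y ∈ G j,
      br x y = -(((-1 : ℂ) ^ (i * j)) • br y x))
    (hjacobi : ∀ i j k : ℤ, ∀ x ∈ G i, ∀ y ∈ G j, ∀ z ∈ G k,
      br x (br y z) = br (br x y) z + ((-1 : ℂ) ^ (i * j)) • br y (br x z))
    (hleibniz : ∀ i j : ℤ, ∀ x ∈ G i, ∀ y ∈ G j,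
      d (br x y) = br (d x) y + ((-1 : ℂ) ^ i) • br x (d y))
    -- the formal variables `t₁, …, t_l`
    (l : ℕ)
    -- `Pi, Φ ∈ g¹ ⊗̂ m`
    (Pi Φ : (Fin l →₀ ℕ) → Wsp)
    (hPideg : ∀ k, Pi k ∈ G 1) (hPim : Pi 0 = 0)
    (hΦdeg : ∀ k, Φ k ∈ G 1) (hΦm : Φ 0 = 0)
    -- `d Pi = 0`
    (hdPi : ∀ k, d (Pi k) = 0)
    -- the Kuranishi-type equation `Φ = Pi − ½ H [Φ, Φ]`
    (hkuranishi : ∀ k, Φ k = Pi k - (1 / 2 : ℂ) •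
      H (∑ p ∈ Finset.HasAntidiagonal.antidiagonal k, br (Φ p.1) (Φ p.2))) :
    -- Maurer–Cartan equation `dΦ + ½[Φ,Φ] = 0` iff `P[Φ,Φ] = 0`
    ((∀ k, d (Φ k) + (1 / 2 : ℂ) •
        (∑ p ∈ Finset.HasAntidiagonal.antidiagonal k, br (Φ p.1) (Φ p.2)) = 0) ↔
      (∀ k, P (∑ p ∈ Finset.HasAntidiagonal.antidiagonal k, br (Φ p.1) (Φ p.2)) = 0)) :=
  kuranishi_solution_MC_iff_obstruction_vanishes_general Wsp G d H P br hdeg_d hdeg_br hhomotopy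
    hskew hjacobi hleibniz l Pi Φ hΦdeg hΦm hdPi hkuranishi
end

section
/- For any 2-form B ∈ Λ²W*, any φ ∈ ΛW*, any X ∈ W and ξ ∈ W*, one has the identity ι_X(exp(B) ∧ φ) + ξ ∧ (exp(B) ∧ φ) = exp(B) ∧ (ι_Xφ + (ξ + ι_XB) ∧ φ). Consequently the annihilator of exp(B) ∧ φ is the B-field transform of the annihilator of φ: E_{exp(B)∧φ} = {X + ξ − ι_XB : X + ξ ∈ E_φ}. -/
open ExteriorAlgebra

section Helpers

variable {R : Type*} [CommRing R] {M : Type*} [AddCommGroup M] [Module R M]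
variable (e : Module.Dual R M)

lemma aux_anticomm (a b : M) : ι R a * ι R b = -(ι R b * ι R a) :=
  eq_neg_of_add_eq_zero_left (ExteriorAlgebra.ι_add_mul_swap a b)

lemma aux_comm2 {x : ExteriorAlgebra R M}
    (hx : x ∈ (LinearMap.range (ExteriorAlgebra.ι R (M := M))) ^ 2) (m : M) :
    x * ι R m = ι R m * x := by
  rw [pow_two] at hx
  refine Submodule.mul_induction_on hx ?_ ?_
  · rintro a ⟨u, rfl⟩ b ⟨v, rfl⟩
    rw [mul_assoc, aux_anticomm v m, mul_neg, ← mul_assoc, aux_anticomm u m,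
      neg_mul, neg_neg, mul_assoc]
  · intro a b ha hb
    rw [add_mul, mul_add, ha, hb]

lemma aux_ctr2_mem {x : ExteriorAlgebra R M}
    (hx : x ∈ (LinearMap.range (ExteriorAlgebra.ι R (M := M))) ^ 2) :
    CliffordAlgebra.contractLeft e x ∈ LinearMap.range (ExteriorAlgebra.ι R (M := M)) := by
  rw [pow_two] at hx
  refine Submodule.mul_induction_on hx ?_ ?_
  · rintro a ⟨u, rfl⟩ b ⟨v, rfl⟩
    rw [CliffordAlgebra.contractLeft_ι_mul, CliffordAlgebra.contractLeft_ι,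
      ← Algebra.commutes, ← Algebra.smul_def]
    exact sub_mem (Submodule.smul_mem _ _ (LinearMap.mem_range_self _ _))
      (Submodule.smul_mem _ _ (LinearMap.mem_range_self _ _))
  · intro a b ha hb
    rw [map_add]; exact add_mem ha hb

lemma aux_der2 {x : ExteriorAlgebra R M}
    (hx : x ∈ (LinearMap.range (ExteriorAlgebra.ι R (M := M))) ^ 2)
    (y : ExteriorAlgebra R M) :
    CliffordAlgebra.contractLeft e (x * y) = CliffordAlgebra.contractLeft e x * y + x * CliffordAlgebra.contractLeft e y := by
  rw [pow_two] at hx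
  revert y
  refine Submodule.mul_induction_on
    (C := fun x => ∀ y, CliffordAlgebra.contractLeft e (x * y) =
      CliffordAlgebra.contractLeft e x * y + x * CliffordAlgebra.contractLeft e y) hx ?_ ?_
  · rintro a ⟨u, rfl⟩ b ⟨v, rfl⟩ y
    rw [mul_assoc, CliffordAlgebra.contractLeft_ι_mul,
      CliffordAlgebra.contractLeft_ι_mul, CliffordAlgebra.contractLeft_ι_mul,
      CliffordAlgebra.contractLeft_ι, ← Algebra.commutes, ← Algebra.smul_def]
    simp only [mul_sub, sub_mul, smul_mul_assoc, mul_smul_comm, smul_sub, mul_assoc]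
    abel
  · intro a b iha ihb y
    rw [add_mul, map_add, map_add, iha, ihb, add_mul, add_mul]
    abel

end Helpers

section Field

variable (K : Type*) [Field K] {M : Type*} [AddCommGroup M] [Module K M]

lemma aux_pow_bot [FiniteDimensional K M] {m : ℕ} (h : Module.finrank K M < m) :
    (LinearMap.range (ExteriorAlgebra.ι K (M := M))) ^ m = ⊥ := by
  have hspan := ExteriorAlgebra.ιMulti_span_fixedDegree K m (M := M)
  refine eq_bot_iff.mpr ?_
  show (⋀[K]^m M : Submodule K (ExteriorAlgebra K M)) ≤ ⊥
  rw [← hspan, Submodule.span_le]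
  rintro x ⟨v, rfl⟩
  have hdep : ¬ LinearIndependent K v := by
    intro hv
    have := hv.fintype_card_le_finrank
    simp only [Fintype.card_fin] at this
    omega
  simp [AlternatingMap.map_linearDependent _ v hdep]

variable [CharZero K]

set_option maxHeartbeats 1000000 in
theorem main_aux [FiniteDimensional K M] (n : ℕ) (hn : Module.finrank K M ≤ n)
    (B : ExteriorAlgebra K M)
    (hB : B ∈ (LinearMap.range (ExteriorAlgebra.ι K (M := M))) ^ 2)
    (expo : ExteriorAlgebra K M)
    (hexpo : expo = ∑ k ∈ Finset.range (n + 1), ((k.factorial : K)⁻¹) • B ^ k) :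
    (∀ (φ : ExteriorAlgebra K M) (d : Module.Dual K M) (ξ : M),
        CliffordAlgebra.contractLeft d (expo * φ) + ι K ξ * (expo * φ)
          = expo * (CliffordAlgebra.contractLeft d φ
              + (ι K ξ + CliffordAlgebra.contractLeft d B) * φ)) ∧
    (∀ (φ : ExteriorAlgebra K M) (d : Module.Dual K M) (ξ' : M),
        (CliffordAlgebra.contractLeft d (expo * φ) + ι K ξ' * (expo * φ) = 0 ↔
          ∃ ξ : M, (CliffordAlgebra.contractLeft d φ + ι K ξ * φ = 0) ∧
            ι K ξ' = ι K ξ - CliffordAlgebra.contractLeft d B)) := by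
  set S := LinearMap.range (ExteriorAlgebra.ι K (M := M)) with hS
  -- powers of B vanish in high degree
  have hBmem : ∀ k : ℕ, B ^ k ∈ S ^ (2 * k) := fun k => by
    rw [pow_mul]; exact Submodule.pow_mem_pow _ hB k
  have hBk : ∀ k : ℕ, n < 2 * k → B ^ k = 0 := by
    intro k hk
    have : S ^ (2 * k) = ⊥ := aux_pow_bot K (lt_of_le_of_lt hn hk)
    simpa [this] using hBmem k
  -- commutation of powers of B with degree-one elements
  have hcommPow : ∀ (k : ℕ) (m : M), B ^ k * ι K m = ι K m * B ^ k := by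
    intro k m
    induction k with
    | zero => simp
    | succ k ih =>
      rw [pow_succ, mul_assoc, aux_comm2 hB, ← mul_assoc, ih, mul_assoc]
  have hcommE : ∀ m : M, expo * ι K m = ι K m * expo := by
    intro m
    rw [hexpo, Finset.sum_mul, Finset.mul_sum]
    exact Finset.sum_congr rfl fun k _ => by
      rw [smul_mul_assoc, hcommPow, mul_smul_comm]
  -- the derivation property for expo
  have hderPow : ∀ (d : Module.Dual K M) (k : ℕ) (y : ExteriorAlgebra K M),
      CliffordAlgebra.contractLeft d (B ^ k * y)
        = CliffordAlgebra.contractLeft d (B ^ k) * y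
          + B ^ k * CliffordAlgebra.contractLeft d y := by
    intro d k
    induction k with
    | zero => intro y; simp [CliffordAlgebra.contractLeft_one]
    | succ k ih =>
      intro y
      rw [pow_succ', mul_assoc, aux_der2 d hB, ih, aux_der2 d hB, mul_add, add_mul]
      simp only [mul_assoc, add_assoc]
  have hderE : ∀ (d : Module.Dual K M) (y : ExteriorAlgebra K M),
      CliffordAlgebra.contractLeft d (expo * y)
        = CliffordAlgebra.contractLeft d expo * y
          + expo * CliffordAlgebra.contractLeft d y := by
    intro d y
    rw [hexpo, Finset.sum_mul, map_sum, map_sum, Finset.sum_mul, Finset.sum_mul,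
      ← Finset.sum_add_distrib]
    exact Finset.sum_congr rfl fun k _ => by
      rw [smul_mul_assoc, map_smul, map_smul, hderPow, smul_add, smul_mul_assoc,
        smul_mul_assoc]
  -- contraction of powers of B
  have hC : ∀ d : Module.Dual K M, CliffordAlgebra.contractLeft d B ∈ S :=
    fun d => aux_ctr2_mem d hB
  have hcommC : ∀ (d : Module.Dual K M) (k : ℕ),
      B ^ k * CliffordAlgebra.contractLeft d B
        = CliffordAlgebra.contractLeft d B * B ^ k := by
    intro d k
    obtain ⟨c, hc⟩ := hC d
    rw [← hc, hcommPow]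
  have hctrPow : ∀ (d : Module.Dual K M) (k : ℕ),
      CliffordAlgebra.contractLeft d (B ^ (k + 1))
        = (k + 1 : K) • (B ^ k * CliffordAlgebra.contractLeft d B) := by
    intro d k
    induction k with
    | zero => simp
    | succ k ih =>
      rw [pow_succ', aux_der2 d hB, ih, mul_smul_comm, ← mul_assoc, ← pow_succ',
        ← hcommC]
      push_cast
      module
  have hBnC : ∀ d : Module.Dual K M,
      B ^ n * CliffordAlgebra.contractLeft d B = 0 := by
    intro d
    have hmem : B ^ n * CliffordAlgebra.contractLeft d B ∈ S ^ (2 * n) * S ^ 1 :=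
      Submodule.mul_mem_mul (hBmem n) (by simpa using hC d)
    rw [← pow_add] at hmem
    have hbot : S ^ (2 * n + 1) = ⊥ := aux_pow_bot K (by omega)
    simpa [hbot] using hmem
  have hctrE : ∀ d : Module.Dual K M,
      CliffordAlgebra.contractLeft d expo
        = expo * CliffordAlgebra.contractLeft d B := by
    intro d
    rw [hexpo, map_sum, Finset.sum_mul, Finset.sum_range_succ', Finset.sum_range_succ]
    simp only [pow_zero, map_smul, CliffordAlgebra.contractLeft_one, smul_zero,
      add_zero, one_mul, smul_mul_assoc]
    rw [hBnC d, smul_zero, add_zero]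
    refine Finset.sum_congr rfl fun k _ => ?_
    rw [hctrPow d k, smul_smul, Nat.factorial_succ]
    congr 1
    have hk1 : ((k : K) + 1) ≠ 0 := Nat.cast_add_one_ne_zero k
    have hkf : ((k.factorial : K)) ≠ 0 :=
      Nat.cast_ne_zero.mpr k.factorial_ne_zero
    push_cast
    field_simp
  -- main identity
  have key : ∀ (φ : ExteriorAlgebra K M) (d : Module.Dual K M) (ξ : M),
      CliffordAlgebra.contractLeft d (expo * φ) + ι K ξ * (expo * φ)
        = expo * (CliffordAlgebra.contractLeft d φ
            + (ι K ξ + CliffordAlgebra.contractLeft d B) * φ) := by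
    intro φ d ξ
    have hxi : ι K ξ * (expo * φ) = expo * (ι K ξ * φ) := by
      rw [← mul_assoc, ← hcommE ξ, mul_assoc]
    rw [hderE, hctrE, hxi]
    simp only [mul_add, add_mul, mul_assoc]
    abel
  refine ⟨key, ?_⟩
  -- expo is a unit
  have hexpo1 : expo = 1 + B * ∑ k ∈ Finset.range n, (((k + 1).factorial : K)⁻¹) • B ^ k := by
    rw [hexpo, Finset.sum_range_succ', Finset.mul_sum]
    simp only [pow_zero, Nat.factorial_zero, Nat.cast_one, inv_one, one_smul]
    rw [add_comm]
    congr 1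
    refine Finset.sum_congr rfl fun k _ => ?_
    rw [mul_smul_comm, ← pow_succ']
  have hcommBP : Commute B (∑ k ∈ Finset.range n, (((k + 1).factorial : K)⁻¹) • B ^ k) := by
    refine Commute.sum_right _ _ _ fun k _ => ?_
    exact ((Commute.refl B).pow_right k).smul_right _
  have hnil : IsNilpotent (B * ∑ k ∈ Finset.range n, (((k + 1).factorial : K)⁻¹) • B ^ k) := by
    refine ⟨n + 1, ?_⟩
    rw [hcommBP.mul_pow, hBk (n + 1) (by omega), zero_mul]
  have hunit : IsUnit expo := by
    rw [hexpo1]; exact hnil.isUnit_one_add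
  -- part 2
  intro φ d ξ'
  constructor
  · intro h
    obtain ⟨c, hc⟩ := hC d
    refine ⟨ξ' + c, ?_, ?_⟩
    · have h2 : ι K ξ' + CliffordAlgebra.contractLeft d B = ι K (ξ' + c) := by
        rw [map_add, hc]
      rw [key φ d ξ', h2] at h
      exact (hunit.mul_right_eq_zero).mp h
    · rw [map_add, hc]; abel
  · rintro ⟨ξ, h0, hξ'⟩
    rw [key φ d ξ']
    have h2 : ι K ξ' + CliffordAlgebra.contractLeft d B = ι K ξ := by
      rw [hξ']; abel
    rw [h2, h0, mul_zero]

end Field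



set_option maxHeartbeats 2000000 in
set_option synthInstance.maxHeartbeats 200000 in
/-- For any 2-form `B ∈ Λ²W*`, any `φ ∈ ΛW*`, any `X ∈ W` and
`ξ ∈ W*`, one has
`ι_X(exp(B) ∧ φ) + ξ ∧ (exp(B) ∧ φ) = exp(B) ∧ (ι_Xφ + (ξ + ι_XB) ∧ φ)`.
Consequently the Clifford annihilator of `exp(B) ∧ φ` is the B-field transform
of that of `φ`: `(X, ξ') ∈ E_{exp(B)∧φ}` iff there is `ξ` with `(X,ξ) ∈ E_φ`
and `ξ' = ξ − ι_XB` (the latter identity read inside `ΛW*` via `ι`). -/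
theorem Bfield_transform_of_annihilator
    (K : Type) [Field K] [CharZero K]
    (W : Type) [AddCommGroup W] [Module K W] [FiniteDimensional K W]
    (B : ExteriorAlgebra K (Module.Dual K W))
    (hB : B ∈ (LinearMap.range (ExteriorAlgebra.ι K (M := Module.Dual K W))) ^ 2) :
    let ctr : W → ExteriorAlgebra K (Module.Dual K W) →ₗ[K]
        ExteriorAlgebra K (Module.Dual K W) :=
      fun X => CliffordAlgebra.contractLeft (Module.Dual.eval K W X)
    let expo : ExteriorAlgebra K (Module.Dual K W) :=
      ∑ k ∈ Finset.range (Module.finrank K W + 1), ((k.factorial : K)⁻¹) • B ^ k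
    (∀ (φ : ExteriorAlgebra K (Module.Dual K W)) (X : W) (ξ : Module.Dual K W),
        ctr X (expo * φ) + ExteriorAlgebra.ι K ξ * (expo * φ)
          = expo * (ctr X φ + (ExteriorAlgebra.ι K ξ + ctr X B) * φ)) ∧
    (∀ (φ : ExteriorAlgebra K (Module.Dual K W)) (X : W)
        (ξ' : Module.Dual K W),
        (ctr X (expo * φ) + ExteriorAlgebra.ι K ξ' * (expo * φ) = 0 ↔
          ∃ ξ : Module.Dual K W,
            (ctr X φ + ExteriorAlgebra.ι K ξ * φ = 0) ∧
            ExteriorAlgebra.ι K ξ' = ExteriorAlgebra.ι K ξ - ctr X B)) := by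
  intro ctr expo
  have h := main_aux K (M := Module.Dual K W) (Module.finrank K W)
    (le_of_eq Subspace.dual_finrank_eq) B hB
    (∑ k ∈ Finset.range (Module.finrank K W + 1), ((k.factorial : K)⁻¹) • B ^ k) rfl
  exact ⟨fun φ X ξ => h.1 φ (Module.Dual.eval K W X) ξ,
    fun φ X ξ' => h.2 φ (Module.Dual.eval K W X) ξ'⟩
end
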